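/- Let T be an upper transition operator on a finite set X such that Tⁿh converges pointwise to a constant function with value μ(h) for every h. Then for any upper expectation E₁ on functions on X, E₁(Tⁿh) → μ(h); the limit functional E_∞(h) := μ(h) is an upper expectation, is T-invariant (E_∞ ∘ T = E_∞), and is the unique T-invariant upper expectation on functions on X. -/
import Mathlib


open Finset Filter

noncomputable def finf {X : Type*} [Fintype X] [Nonempty X] (g : X → ℝ) : ℝ :=
  Finset.univ.inf' Finset.univ_nonempty g

noncomputable def fsup {X : Type*} [Fintype X] [Nonempty X] (g : X → ℝ) : ℝ :=
  Finset.univ.sup' Finset.univ_nonempty g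

def IsUpperExpectation {X : Type*} [Fintype X] [Nonempty X] (U : (X → ℝ) → ℝ) : Prop :=
  (∀ g : X → ℝ, finf g ≤ U g ∧ U g ≤ fsup g) ∧
  (∀ g₁ g₂ : X → ℝ, U (g₁ + g₂) ≤ U g₁ + U g₂) ∧
  (∀ (l : ℝ), 0 ≤ l → ∀ g : X → ℝ, U (l • g) = l * U g)

def IsUpperTransition {X : Type*} [Fintype X] [Nonempty X] (T : (X → ℝ) → (X → ℝ)) : Prop :=
  ∀ x : X, IsUpperExpectation (fun h => T h x)

def ind {X : Type*} [DecidableEq X] (y : X) : X → ℝ := fun z => if z = y then 1 else 0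

section Aux
variable {X : Type*} [Fintype X] [Nonempty X]

lemma finf_le (g : X → ℝ) (x : X) : finf g ≤ g x :=
  Finset.inf'_le _ (Finset.mem_univ x)

lemma le_fsup (g : X → ℝ) (x : X) : g x ≤ fsup g :=
  Finset.le_sup' _ (Finset.mem_univ x)

lemma fsup_le {g : X → ℝ} {c : ℝ} (h : ∀ x, g x ≤ c) : fsup g ≤ c :=
  Finset.sup'_le _ _ fun x _ => h x

lemma le_finf {g : X → ℝ} {c : ℝ} (h : ∀ x, c ≤ g x) : c ≤ finf g :=
  Finset.le_inf' _ _ fun x _ => h x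

lemma ue_const {U : (X → ℝ) → ℝ} (hU : IsUpperExpectation U) (c : ℝ) :
    U (fun _ => c) = c := by
  have h1 := (hU.1 (fun _ => c)).1
  have h2 := (hU.1 (fun _ => c)).2
  have e1 : finf (fun _ : X => c) = c := by
    simp [finf, Finset.inf'_const]
  have e2 : fsup (fun _ : X => c) = c := by
    simp [fsup, Finset.sup'_const]
  linarith [e1 ▸ h1, e2 ▸ h2]

lemma ue_sub_le {U : (X → ℝ) → ℝ} (hU : IsUpperExpectation U) (g g' : X → ℝ) :
    U g - U g' ≤ fsup (g - g') := by
  have h1 : U g ≤ U g' + U (g - g') := by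
    have := hU.2.1 g' (g - g')
    simpa using this
  have h2 : U (g - g') ≤ fsup (g - g') := (hU.1 _).2
  linarith

lemma ue_dist {U : (X → ℝ) → ℝ} (hU : IsUpperExpectation U) {g g' : X → ℝ} {ε : ℝ}
    (h : ∀ x, |g x - g' x| ≤ ε) : |U g - U g'| ≤ ε := by
  rw [abs_le]
  constructor
  · have := ue_sub_le hU g' g
    have h2 : fsup (g' - g) ≤ ε := fsup_le fun x => by
      have := h x; simp only [Pi.sub_apply]; cases abs_le.mp this; linarith
    linarith
  · have := ue_sub_le hU g g'
    have h2 : fsup (g - g') ≤ ε := fsup_le fun x => by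
      have := abs_le.mp (h x); simp only [Pi.sub_apply]; linarith [this.2]
    linarith

lemma ut_mono {T : (X → ℝ) → (X → ℝ)} (hT : IsUpperTransition T) {g g' : X → ℝ}
    (h : ∀ x, g x ≤ g' x) : ∀ x, T g x ≤ T g' x := by
  intro x
  have h1 : T g x - T g' x ≤ fsup (g - g') := ue_sub_le (hT x) g g'
  have h2 : fsup (g - g') ≤ 0 := fsup_le fun y => by
    simp only [Pi.sub_apply]; linarith [h y]
  linarith
end Aux

theorem limit_upper_expectation_invariant_unique {X : Type*} [Fintype X] [Nonempty X]
    (T : (X → ℝ) → (X → ℝ)) (hT : IsUpperTransition T)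
    (μ : (X → ℝ) → ℝ)
    (hconv : ∀ (h : X → ℝ) (x : X), Tendsto (fun n => T^[n] h x) atTop (nhds (μ h))) :
    (∀ E₁ : (X → ℝ) → ℝ, IsUpperExpectation E₁ →
        ∀ h : X → ℝ, Tendsto (fun n => E₁ (T^[n] h)) atTop (nhds (μ h))) ∧
    IsUpperExpectation μ ∧
    (∀ h : X → ℝ, μ (T h) = μ h) ∧
    (∀ E : (X → ℝ) → ℝ, IsUpperExpectation E → (∀ h, E (T h) = E h) → ∀ h, E h = μ h) := by
  -- Part 1: convergence of E₁ (Tⁿ h)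
  have key : ∀ E₁ : (X → ℝ) → ℝ, IsUpperExpectation E₁ →
      ∀ h : X → ℝ, Tendsto (fun n => E₁ (T^[n] h)) atTop (nhds (μ h)) := by
    intro E₁ hE h
    rw [Metric.tendsto_atTop]
    intro ε hε
    have hx : ∀ x : X, ∃ N : ℕ, ∀ n ≥ N, |T^[n] h x - μ h| < ε / 2 := by
      intro x
      have := Metric.tendsto_atTop.mp (hconv h x) (ε / 2) (by linarith)
      obtain ⟨N, hN⟩ := this
      exact ⟨N, fun n hn => by simpa [Real.dist_eq] using hN n hn⟩
    choose N hN using hx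
    refine ⟨Finset.univ.sup N, fun n hn => ?_⟩
    have hb : ∀ x, |T^[n] h x - (fun _ : X => μ h) x| ≤ ε / 2 := fun x =>
      (hN x n (le_trans (Finset.le_sup (Finset.mem_univ x)) hn)).le
    have hd : |E₁ (T^[n] h) - E₁ (fun _ => μ h)| ≤ ε / 2 := ue_dist hE hb
    rw [Real.dist_eq]
    rw [ue_const hE (μ h)] at hd
    linarith [abs_nonneg (E₁ (T^[n] h) - μ h)]
  -- bounds on iterates
  have bounds : ∀ (h : X → ℝ) (n : ℕ) (x : X),
      finf h ≤ T^[n] h x ∧ T^[n] h x ≤ fsup h := by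
    intro h n
    induction n with
    | zero => intro x; exact ⟨finf_le h x, le_fsup h x⟩
    | succ n ih =>
      intro x
      rw [Function.iterate_succ_apply']
      constructor
      · have h1 : finf h ≤ finf (T^[n] h) := le_finf fun y => (ih y).1
        exact le_trans h1 ((hT x).1 (T^[n] h)).1
      · have h1 : fsup (T^[n] h) ≤ fsup h := fsup_le fun y => (ih y).2
        exact le_trans ((hT x).1 (T^[n] h)).2 h1
  have x0 : X := Classical.arbitrary X
  -- μ is an upper expectation
  have hμ : IsUpperExpectation μ := by
    refine ⟨fun g => ?_, fun g₁ g₂ => ?_, fun l hl g => ?_⟩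
    · constructor
      · exact ge_of_tendsto (hconv g x0) (Filter.Eventually.of_forall fun n => (bounds g n x0).1)
      · exact le_of_tendsto (hconv g x0) (Filter.Eventually.of_forall fun n => (bounds g n x0).2)
    · -- subadditivity
      have hsub : ∀ (n : ℕ) (x : X), T^[n] (g₁ + g₂) x ≤ T^[n] g₁ x + T^[n] g₂ x := by
        intro n
        induction n with
        | zero => intro x; simp
        | succ n ih =>
          intro x
          rw [Function.iterate_succ_apply', Function.iterate_succ_apply',
            Function.iterate_succ_apply']
          calc T (T^[n] (g₁ + g₂)) x ≤ T (T^[n] g₁ + T^[n] g₂) x :=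
                ut_mono hT (fun y => by simpa using ih y) x
            _ ≤ T (T^[n] g₁) x + T (T^[n] g₂) x := (hT x).2.1 _ _
      exact le_of_tendsto_of_tendsto' (hconv (g₁ + g₂) x0)
        ((hconv g₁ x0).add (hconv g₂ x0)) (fun n => hsub n x0)
    · -- homogeneity
      have hhom : ∀ (n : ℕ) (x : X), T^[n] (l • g) x = l * T^[n] g x := by
        intro n
        induction n with
        | zero => intro x; simp
        | succ n ih =>
          intro x
          rw [Function.iterate_succ_apply', Function.iterate_succ_apply']
          have heq : T^[n] (l • g) = l • T^[n] g := by
            funext y; simpa using ih y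
          rw [heq]
          exact (hT x).2.2 l hl (T^[n] g)
      have h1 : Tendsto (fun n => T^[n] (l • g) x0) atTop (nhds (l * μ g)) := by
        have := (hconv g x0).const_mul l
        simpa [hhom] using this
      exact tendsto_nhds_unique (hconv (l • g) x0) h1
  -- invariance
  have hinv : ∀ h : X → ℝ, μ (T h) = μ h := by
    intro h
    have h1 : Tendsto (fun n => T^[n] (T h) x0) atTop (nhds (μ h)) := by
      have h2 : Tendsto (fun n : ℕ => T^[n + 1] h x0) atTop (nhds (μ h)) :=
        (hconv h x0).comp (tendsto_add_atTop_nat 1)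
      simpa [Function.iterate_succ_apply] using h2
    exact tendsto_nhds_unique (hconv (T h) x0) h1
  refine ⟨key, hμ, hinv, ?_⟩
  intro E hE hEinv h
  have hconst : ∀ n : ℕ, E (T^[n] h) = E h := by
    intro n
    induction n with
    | zero => simp
    | succ n ih => rw [Function.iterate_succ_apply', hEinv, ih]
  have h1 : Tendsto (fun n => E (T^[n] h)) atTop (nhds (E h)) := by
    simp only [hconst]; exact tendsto_const_nhds
  exact tendsto_nhds_unique h1 (key E hE h)
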